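/- arXiv:1301.5260 — 6 statements merged into one kernel-verified Lean document; each statement's English description precedes it below -/
import Mathlib

section
/- Let N ≥ 2 and let K be the normal subgroup of G̃_N generated by the elements u₁², u₂² and U²u₂⁻²u₁⁻². If N is even, then G̃_N/K is isomorphic to the semidirect product (ℤ/2)² ⋊ SL₂(ℤ/4); if N is odd, then G̃_N/K is isomorphic to the semidirect product (ℤ/2)² ⋊ PSL₂(ℤ/4). In both cases the action on (ℤ/2)² is given by reducing matrices modulo 2 and letting SL₂(ℤ/2) act on column vectors by matrix multiplication (for PSL₂(ℤ/4) this is well defined since the center reduces to the identity modulo 2). -/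
/-!
In `G̃_N / K` the images of `u₁, u₂` are commuting involutions spanning a Klein four-group
`A` that `S` and `T` normalize, `U` is a central involution, `S² = (ST)³ = U` and `T⁴ = 1`.
Sending `u₁, u₂` to the standard basis of `(ℤ/2)²`, `U` to `-1` and `S, T` to
`[[0, 1], [-1, 0]]`, `[[1, 0], [1, 1]]` defines a surjection onto `(ℤ/2)² ⋊ SL₂(ℤ/4)`; for odd
`N` the relations `U² = U^N = 1` force `U = 1` and it factors through `(ℤ/2)² ⋊ PSL₂(ℤ/4)`.
It is an isomorphism by counting: `G̃_N / K = A ⟨S, T⟩`, and `⟨S, T⟩` is a quotient of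
`⟨s, t | s⁴, t⁴, (st)³ = s²⟩`, a central extension by `⟨s²⟩` of the von Dyck group
`⟨s, t | s², t⁴, (st)³⟩`, whose order is at most `24` by coset enumeration over `⟨t⟩`.
So `|G̃_N / K| ≤ 4 · 48`, and `≤ 4 · 24` when `U = 1`.
-/

/-- Relators of the modular `N`-state chiral Potts group `G̃_N`: generators
`0 ↦ u₁`, `1 ↦ u₂`, `2 ↦ U`, `3 ↦ S`, `4 ↦ T`. -/
def mcpRels (N : ℕ) : Set (FreeGroup (Fin 5)) :=
  { FreeGroup.of 0 * FreeGroup.of 1 * (FreeGroup.of 0)⁻¹ *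
      ((FreeGroup.of 2) ^ 2 * ((FreeGroup.of 1)⁻¹) ^ 3)⁻¹,
    FreeGroup.of 0 * FreeGroup.of 2 * (FreeGroup.of 0)⁻¹ *
      ((FreeGroup.of 2)⁻¹ * (FreeGroup.of 0) ^ 2)⁻¹,
    FreeGroup.of 1 * FreeGroup.of 2 * (FreeGroup.of 1)⁻¹ *
      ((FreeGroup.of 2)⁻¹ * (FreeGroup.of 1) ^ 2)⁻¹,
    (FreeGroup.of 0) ^ (2 * N), (FreeGroup.of 1) ^ (2 * N), (FreeGroup.of 2) ^ N,
    FreeGroup.of 3 * FreeGroup.of 0 * (FreeGroup.of 3)⁻¹ * (FreeGroup.of 1)⁻¹,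
    FreeGroup.of 3 * FreeGroup.of 1 * (FreeGroup.of 3)⁻¹ *
      ((FreeGroup.of 2)⁻¹ * FreeGroup.of 0 * FreeGroup.of 2)⁻¹,
    FreeGroup.of 3 * FreeGroup.of 2 * (FreeGroup.of 3)⁻¹ * (FreeGroup.of 2)⁻¹,
    FreeGroup.of 4 * FreeGroup.of 0 * (FreeGroup.of 4)⁻¹ *
      (FreeGroup.of 0 * (FreeGroup.of 1)⁻¹)⁻¹,
    FreeGroup.of 4 * FreeGroup.of 1 * (FreeGroup.of 4)⁻¹ * (FreeGroup.of 1)⁻¹,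
    FreeGroup.of 4 * FreeGroup.of 2 * (FreeGroup.of 4)⁻¹ * (FreeGroup.of 2)⁻¹,
    (FreeGroup.of 3) ^ 2 * FreeGroup.of 2,
    (FreeGroup.of 3 * FreeGroup.of 4) ^ 3 * FreeGroup.of 2,
    (FreeGroup.of 4) ^ 4 * ((FreeGroup.of 1) ^ 2)⁻¹ }

/-- The modular `N`-state chiral Potts group `G̃_N`. -/
abbrev MCP (N : ℕ) := PresentedGroup (mcpRels N)

def mu₁ (N : ℕ) : MCP N := PresentedGroup.of 0
def mu₂ (N : ℕ) : MCP N := PresentedGroup.of 1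
def mU (N : ℕ) : MCP N := PresentedGroup.of 2

/-- The normal subgroup `K` of `G̃_N` generated by `u₁²`, `u₂²`, `U²u₂⁻²u₁⁻²`. -/
def Ksub (N : ℕ) : Subgroup (MCP N) :=
  Subgroup.normalClosure {mu₁ N ^ 2, mu₂ N ^ 2, mU N ^ 2 * (mu₂ N ^ 2)⁻¹ * (mu₁ N ^ 2)⁻¹}

instance (N : ℕ) : (Ksub N).Normal := Subgroup.normalClosure_normal

/-- Column vectors `(ℤ/2)²`. -/
abbrev V2 := Fin 2 → ZMod 2

/-- `SL₂(ℤ/4)`. -/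
abbrev SL2Z4 := Matrix.SpecialLinearGroup (Fin 2) (ZMod 4)

/-- `PSL₂(ℤ/4)`: the quotient of `SL₂(ℤ/4)` by its center. -/
abbrev PSL2Z4 := SL2Z4 ⧸ Subgroup.center SL2Z4

/-- Linear automorphisms of `(ℤ/2)²` as multiplicative automorphisms of the
corresponding multiplicative group. -/
def linToMulAut : (V2 ≃ₗ[ZMod 2] V2) →* MulAut (Multiplicative V2) where
  toFun e := AddEquiv.toMultiplicative e.toAddEquiv
  map_one' := by ext x; rfl
  map_mul' e₁ e₂ := by ext x; rfl

/-- The action of `SL₂(ℤ/4)` on `(ℤ/2)²` given by reducing matrices modulo 2 and letting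
`SL₂(ℤ/2)` act on column vectors by matrix multiplication. -/
def actSL : SL2Z4 →* MulAut (Multiplicative V2) :=
  linToMulAut.comp ((Matrix.SpecialLinearGroup.toLin').comp
    (Matrix.SpecialLinearGroup.map (ZMod.castHom (show (2:ℕ) ∣ 4 by norm_num) (ZMod 2))))

open scoped Pointwise

section Generation

variable {G : Type*} [Group G]

theorem Set.Finite.smul_mem_of_closure_eq_top {α : Type*} [MulAction G α] {S : Set G}
    (hS : Subgroup.closure S = ⊤) {T : Set α} (hT : T.Finite)
    (hST : ∀ g ∈ S, ∀ x ∈ T, g • x ∈ T) (g : G) {x : α} (hx : x ∈ T) : g • x ∈ T := by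
  have hstab : S ⊆ MulAction.stabilizer G T := fun s hs =>
    Set.eq_of_subset_of_ncard_le (Set.smul_set_subset_iff.2 (hST s hs))
      (Set.ncard_smul_set s T).ge hT
  have hgT : g • T = T := (Subgroup.closure_le _).2 hstab (hS ▸ Subgroup.mem_top g)
  exact hgT ▸ Set.smul_mem_smul_set hx

theorem Subgroup.closure_eq_top_of_forall_mem_iterate [DecidableEq G] (T : Finset G) (n : ℕ)
    (h : ∀ g : G, g ∈ (fun X => X ∪ X * T)^[n] {1}) : closure (T : Set G) = ⊤ := by
  have hsub : ∀ k, (((fun X => X ∪ X * T)^[k] {1} : Finset G) : Set G) ⊆ closure (T : Set G) := by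
    intro k
    induction k with
    | zero => simp
    | succ k ih =>
      rw [Function.iterate_succ_apply', Finset.coe_union, Finset.coe_mul]
      exact Set.union_subset ih (Set.mul_subset_iff.2 fun x hx y hy =>
        mul_mem (ih hx) (subset_closure hy))
  exact eq_top_iff.2 fun g _ => hsub n (h g)

theorem Subgroup.closure_image_eq_top {H : Type*} [Group H] {f : G →* H}
    (hf : Function.Surjective f) {S : Set G} (hS : closure S = ⊤) : closure (f '' S) = ⊤ := by
  rw [← MonoidHom.map_closure, hS, map_top_of_surjective f hf]

theorem Subgroup.closure_subtype_pair_eq_top (s t : G) :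
    closure {(⟨s, subset_closure (by simp)⟩ : closure {s, t}), ⟨t, subset_closure (by simp)⟩} =
      ⊤ := by
  rw [← closure_closure_coe_preimage]
  congr 1
  ext ⟨x, hx⟩
  simp [Subtype.ext_iff]

theorem Subgroup.mem_center_of_closure_eq_top {S : Set G} (hS : closure S = ⊤) {z : G}
    (hz : ∀ g ∈ S, g * z = z * g) : z ∈ center G := by
  rwa [← centralizer_univ, ← coe_top, ← hS, centralizer_closure, mem_centralizer_iff]

theorem Subgroup.normal_zpowers_of_mem_center {z : G} (hz : z ∈ center G) : (zpowers z).Normal :=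
  ⟨fun n hn g => by rwa [mem_center_iff.1 (zpowers_le.2 hz hn) g, mul_inv_cancel_right]⟩

end Generation

section Counting

variable {G : Type*} [Group G]

theorem Subgroup.finite_and_card_le_mul (H : Subgroup G) {m n : ℕ}
    (hquot : Finite (G ⧸ H) ∧ Nat.card (G ⧸ H) ≤ m) (hH : Finite H ∧ Nat.card H ≤ n) :
    Finite G ∧ Nat.card G ≤ m * n := by
  obtain ⟨_, hm⟩ := hquot
  obtain ⟨_, hn⟩ := hH
  have hcard := H.card_eq_card_quotient_mul_card_subgroup
  refine ⟨Nat.finite_of_card_ne_zero ?_, hcard ▸ Nat.mul_le_mul hm hn⟩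
  rw [hcard]
  exact (Nat.mul_pos Nat.card_pos Nat.card_pos).ne'

theorem Subgroup.finite_and_card_zpowers_le {g : G} {n : ℕ} (hn : n ≠ 0) (hg : g ^ n = 1) :
    Finite (zpowers g) ∧ Nat.card (zpowers g) ≤ n := by
  have hfin : IsOfFinOrder g := isOfFinOrder_iff_pow_eq_one.2 ⟨n, Nat.pos_of_ne_zero hn, hg⟩
  exact ⟨hfin.finite_zpowers,
    Nat.card_zpowers g ▸ orderOf_le_of_pow_eq_one (Nat.pos_of_ne_zero hn) hg⟩

/-- Coset enumeration: a finite set of cosets of `H` stable under the generators is all of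
`G ⧸ H`. -/
theorem Subgroup.finite_and_card_le_of_cosets {S : Set G} (hS : closure S = ⊤)
    (H : Subgroup G) {n : ℕ} (hH : Finite H ∧ Nat.card H ≤ n) (R : Finset G) (h1 : (1 : G) ∈ R)
    (hR : ∀ g ∈ S, ∀ r ∈ R, ∃ r' ∈ R, ∃ h ∈ H, g * r = r' * h) :
    Finite G ∧ Nat.card G ≤ R.card * n := by
  set T : Set (G ⧸ H) := (↑) '' (R : Set G)
  have hST : ∀ g ∈ S, ∀ x ∈ T, g • x ∈ T := by
    rintro g hg _ ⟨r, hr, rfl⟩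
    obtain ⟨r', hr', h, hh, hgr⟩ := hR g hg r hr
    exact ⟨r', hr', by rw [← QuotientGroup.mk_mul_of_mem r' hh, ← hgr]; rfl⟩
  have hsurj : Function.Surjective fun r : R => (r : G ⧸ H) := by
    refine QuotientGroup.mk_surjective.forall.2 fun g => ?_
    obtain ⟨r, hr, hgr⟩ := (R.finite_toSet.image _).smul_mem_of_closure_eq_top hS hST g
      ⟨1, h1, rfl⟩
    exact ⟨⟨r, hr⟩, hgr.trans (by simp)⟩
  refine H.finite_and_card_le_mul ⟨Finite.of_surjective _ hsurj, ?_⟩ hH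
  simpa using Nat.card_le_card_of_surjective _ hsurj

/-- The von Dyck group `D(2, 3, 4)` (that is, `S₄`): its cosets of `⟨t⟩` are represented by
`1, s, ts, sts, t²s, st²s`. -/
theorem finite_and_card_le_24_of_vonDyck {s t : G} (hgen : Subgroup.closure {s, t} = ⊤)
    (hs : s ^ 2 = 1) (ht : t ^ 4 = 1) (hst : (s * t) ^ 3 = 1) :
    Finite G ∧ Nat.card G ≤ 24 := by
  have hss : s * s = 1 := by rw [← sq, hs]
  have hs_inv : s⁻¹ = s := inv_eq_of_mul_eq_one_left hss
  have ht_inv : t⁻¹ = t ^ 3 := inv_eq_of_mul_eq_one_left (by rw [← pow_succ, ht])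
  have htst : t * s * t = s * t ^ 3 * s := by
    rw [show t * s * t = s⁻¹ * (s * t) ^ 3 * t⁻¹ * s⁻¹ by simp only [pow_succ, pow_zero]; group,
      hst, hs_inv, ht_inv]
    group
  have hsts : t * (s * t * s) = s * t ^ 3 := by
    calc t * (s * t * s) = t * s * t * s := by group
      _ = s * t ^ 3 * (s * s) := by rw [htst]; group
      _ = s * t ^ 3 := by rw [hss, mul_one]
  have ht2s : t * (t ^ 2 * s) = s * t * s * t := by
    calc t * (t ^ 2 * s) = s * s * t ^ 3 * s := by rw [hss]; group
      _ = s * (t * s * t) := by rw [htst]; group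
      _ = s * t * s * t := by group
  have hst2s : t * (s * t ^ 2 * s) = s * t ^ 2 * s * t ^ 3 := by
    calc t * (s * t ^ 2 * s) = t * s * t * (t * s) := by simp only [sq, mul_assoc]
      _ = s * t ^ 2 * (t * (s * t * s)) := by rw [htst]; group
      _ = s * t ^ 2 * s * t ^ 3 := by rw [hsts]; group
  classical
  set R : Finset G := {1, s, t * s, s * t * s, t ^ 2 * s, s * t ^ 2 * s}
  have hcoset : ∀ x, ∀ r' ∈ R, ∀ k : ℕ, x = r' * t ^ k →
      ∃ r' ∈ R, ∃ h ∈ Subgroup.zpowers t, x = r' * h :=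
    fun x r' hr' k hx => ⟨r', hr', t ^ k, pow_mem (Subgroup.mem_zpowers t) k, hx⟩
  have := Subgroup.finite_and_card_le_of_cosets hgen _
    (Subgroup.finite_and_card_zpowers_le four_ne_zero ht) R (by simp [R]) ?_
  · exact ⟨this.1, this.2.trans (Nat.mul_le_mul_right 4 Finset.card_le_six)⟩
  simp only [Set.forall_mem_insert, Set.mem_singleton_iff, forall_eq, R, Finset.forall_mem_insert,
    Finset.mem_singleton]
  refine ⟨⟨?_, ?_, ?_, ?_, ?_, ?_⟩, ⟨?_, ?_, ?_, ?_, ?_, ?_⟩⟩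
  · exact hcoset _ s (by simp [R]) 0 (by group)
  · exact hcoset _ 1 (by simp [R]) 0 (by rw [hss]; group)
  · exact hcoset _ (s * t * s) (by simp [R]) 0 (by group)
  · exact hcoset _ (t * s) (by simp [R]) 0 (by rw [← mul_assoc, ← mul_assoc, hss]; group)
  · exact hcoset _ (s * t ^ 2 * s) (by simp [R]) 0 (by group)
  · exact hcoset _ (t ^ 2 * s) (by simp [R]) 0 (by rw [← mul_assoc, ← mul_assoc, hss]; group)
  · exact hcoset _ 1 (by simp [R]) 1 (by group)
  · exact hcoset _ (t * s) (by simp [R]) 0 (by group)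
  · exact hcoset _ (t ^ 2 * s) (by simp [R]) 0 (by simp [sq, mul_assoc])
  · exact hcoset _ s (by simp [R]) 3 hsts
  · exact hcoset _ (s * t * s) (by simp [R]) 1 (by rw [ht2s]; group)
  · exact hcoset _ (s * t ^ 2 * s) (by simp [R]) 3 hst2s

/-- `s²` is central, and the quotient by `⟨s²⟩` is a quotient of `D(2, 3, 4)`. -/
theorem finite_and_card_le_48_of_vonDyck_central {s t : G}
    (hgen : Subgroup.closure {s, t} = ⊤) (hs : s ^ 4 = 1) (ht : t ^ 4 = 1)
    (hst : (s * t) ^ 3 = s ^ 2) :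
    Finite G ∧ Nat.card G ≤ 48 := by
  have hcentral : s ^ 2 ∈ Subgroup.center G := by
    have hcs : Commute s (s ^ 2) := (Commute.refl s).pow_right 2
    have hcst : Commute (s * t) (s ^ 2) := hst ▸ (Commute.refl (s * t)).pow_right 3
    have hct : Commute t (s ^ 2) := by simpa using hcs.inv_left.mul_left hcst
    refine Subgroup.mem_center_of_closure_eq_top hgen ?_
    rintro g (rfl | rfl)
    exacts [hcs.eq, hct.eq]
  have := Subgroup.normal_zpowers_of_mem_center hcentral
  set π := QuotientGroup.mk' (Subgroup.zpowers (s ^ 2))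
  have hπ : π (s ^ 2) = 1 := (QuotientGroup.eq_one_iff _).2 (Subgroup.mem_zpowers _)
  have hquot : Finite (G ⧸ Subgroup.zpowers (s ^ 2)) ∧
      Nat.card (G ⧸ Subgroup.zpowers (s ^ 2)) ≤ 24 := by
    refine finite_and_card_le_24_of_vonDyck (s := π s) (t := π t) ?_ ?_ ?_ ?_
    · rw [← Set.image_pair]
      exact Subgroup.closure_image_eq_top (QuotientGroup.mk'_surjective _) hgen
    · rw [← map_pow, hπ]
    · rw [← map_pow, ht, map_one]
    · rw [← map_mul, ← map_pow, hst, hπ]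
  exact (Subgroup.zpowers (s ^ 2)).finite_and_card_le_mul hquot
    (Subgroup.finite_and_card_zpowers_le two_ne_zero (by rw [← pow_mul, hs]))

theorem finite_and_card_closure_le_24 {s t : G} (hs : s ^ 2 = 1) (ht : t ^ 4 = 1)
    (hst : (s * t) ^ 3 = 1) :
    Finite (Subgroup.closure {s, t}) ∧ Nat.card (Subgroup.closure {s, t}) ≤ 24 :=
  finite_and_card_le_24_of_vonDyck (Subgroup.closure_subtype_pair_eq_top s t)
    (Subtype.ext hs) (Subtype.ext ht) (Subtype.ext hst)

theorem finite_and_card_closure_le_48 {s t : G} (hs : s ^ 4 = 1) (ht : t ^ 4 = 1)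
    (hst : (s * t) ^ 3 = s ^ 2) :
    Finite (Subgroup.closure {s, t}) ∧ Nat.card (Subgroup.closure {s, t}) ≤ 48 :=
  finite_and_card_le_48_of_vonDyck_central (Subgroup.closure_subtype_pair_eq_top s t)
    (Subtype.ext hs) (Subtype.ext ht) (Subtype.ext hst)

/-- The cosets `r ⟨d, e⟩`, `r ∈ {1, a, b, ab}`, are permuted by `a`, `d` and `e`. -/
theorem finite_and_card_le_four_mul {a b d e : G} {n : ℕ}
    (hgen : Subgroup.closure {a, d, e} = ⊤) (ha : a ^ 2 = 1) (hb : b ^ 2 = 1)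
    (hab : a * b = b * a) (hda : d * a = b * d) (hdb : d * b = a * d)
    (hea : e * a = a * b * e) (heb : e * b = b * e)
    (hH : Finite (Subgroup.closure {d, e}) ∧ Nat.card (Subgroup.closure {d, e}) ≤ n) :
    Finite G ∧ Nat.card G ≤ 4 * n := by
  classical
  have haa : a * a = 1 := by rw [← sq, ha]
  have hbb : b * b = 1 := by rw [← sq, hb]
  have hd : d ∈ Subgroup.closure {d, e} := Subgroup.subset_closure (by simp)
  have he : e ∈ Subgroup.closure {d, e} := Subgroup.subset_closure (by simp)
  set R : Finset G := {1, a, b, a * b}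
  have := Subgroup.finite_and_card_le_of_cosets hgen _ hH R (by simp [R]) ?_
  · exact ⟨this.1, this.2.trans (Nat.mul_le_mul_right n Finset.card_le_four)⟩
  simp only [Set.forall_mem_insert, Set.mem_singleton_iff, forall_eq, R, Finset.forall_mem_insert,
    Finset.mem_singleton]
  refine ⟨⟨?_, ?_, ?_, ?_⟩, ⟨?_, ?_, ?_, ?_⟩, ⟨?_, ?_, ?_, ?_⟩⟩
  · exact ⟨a, by simp, 1, one_mem _, by simp⟩
  · exact ⟨1, by simp, 1, one_mem _, by simp [haa]⟩
  · exact ⟨a * b, by simp, 1, one_mem _, by simp⟩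
  · exact ⟨b, by simp, 1, one_mem _, by simp [← mul_assoc, haa]⟩
  · exact ⟨1, by simp, d, hd, by simp⟩
  · exact ⟨b, by simp, d, hd, hda⟩
  · exact ⟨a, by simp, d, hd, hdb⟩
  · exact ⟨a * b, by simp, d, hd, by rw [← mul_assoc, hda, mul_assoc, hdb, ← mul_assoc, hab]⟩
  · exact ⟨1, by simp, e, he, by simp⟩
  · exact ⟨a * b, by simp, e, he, hea⟩
  · exact ⟨b, by simp, e, he, heb⟩
  · exact ⟨a, by simp, e, he,
      by rw [← mul_assoc, hea, mul_assoc, heb, ← mul_assoc, mul_assoc a, hbb, mul_one]⟩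

theorem nonempty_mulEquiv_of_surjective {H : Type*} [Group H] (f : G →* H)
    (hf : Function.Surjective f) (hG : Finite G ∧ Nat.card G ≤ Nat.card H) :
    Nonempty (G ≃* H) :=
  have := hG.1
  ⟨MulEquiv.ofBijective f (hf.bijective_of_nat_card_le hG.2)⟩

end Counting

namespace SemidirectProduct

variable {N G : Type*} [Group N] [Group G] {φ : G →* MulAut N}

instance [DecidableEq N] [DecidableEq G] : DecidableEq (N ⋊[φ] G) := fun a b =>
  decidable_of_iff (a.left = b.left ∧ a.right = b.right) SemidirectProduct.ext_iff.symm

theorem closure_image_inl_union_image_inr {S : Set N} {T : Set G}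
    (hS : Subgroup.closure S = ⊤) (hT : Subgroup.closure T = ⊤) :
    Subgroup.closure ((inl '' S ∪ inr '' T : Set (N ⋊[φ] G))) = ⊤ := by
  refine eq_top_iff.2 fun x _ => inl_left_mul_inr_right x ▸ mul_mem ?_ ?_
  · refine Subgroup.closure_mono Set.subset_union_left ?_
    rw [← MonoidHom.map_closure, hS]
    exact ⟨_, Subgroup.mem_top _, rfl⟩
  · refine Subgroup.closure_mono Set.subset_union_right ?_
    rw [← MonoidHom.map_closure, hT]
    exact ⟨_, Subgroup.mem_top _, rfl⟩

theorem map_surjective {N₂ G₂ : Type*} [Group N₂] [Group G₂] {φ₂ : G₂ →* MulAut N₂}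
    {fn : N →* N₂} {fg : G →* G₂}
    (h : ∀ g, fn.comp (φ g).toMonoidHom = (φ₂ (fg g)).toMonoidHom.comp fn)
    (hfn : Function.Surjective fn) (hfg : Function.Surjective fg) :
    Function.Surjective (map fn fg h) := by
  intro y
  obtain ⟨n, hn⟩ := hfn y.left
  obtain ⟨g, hg⟩ := hfg y.right
  exact ⟨⟨n, g⟩, SemidirectProduct.ext hn hg⟩

end SemidirectProduct

open SemidirectProduct

def Smat : SL2Z4 := ⟨!![0, 1; -1, 0], by decide⟩
def Tmat : SL2Z4 := ⟨!![1, 0; 1, 1], by decide⟩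
def Umat : SL2Z4 := ⟨!![-1, 0; 0, -1], by decide⟩

set_option maxRecDepth 10000 in
theorem closure_Smat_Tmat : Subgroup.closure {Smat, Tmat} = ⊤ := by
  simpa using Subgroup.closure_eq_top_of_forall_mem_iterate {Smat, Tmat} 8 (by decide)

theorem card_SL2Z4 : Nat.card SL2Z4 = 48 := by
  rw [Nat.card_eq_fintype_card]; decide

theorem mem_center_SL2Z4_iff {g : SL2Z4} : g ∈ Subgroup.center SL2Z4 ↔ g = 1 ∨ g = Umat := by
  rw [Subgroup.mem_center_iff]; revert g; decide

theorem card_center_SL2Z4 : Nat.card (Subgroup.center SL2Z4) = 2 := by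
  rw [Nat.card_eq_fintype_card]; decide

theorem card_PSL2Z4 : Nat.card PSL2Z4 = 24 := by
  have h := (Subgroup.center SL2Z4).card_eq_card_quotient_mul_card_subgroup
  rw [card_SL2Z4, card_center_SL2Z4] at h
  change Nat.card (SL2Z4 ⧸ Subgroup.center SL2Z4) = 24
  omega

theorem actSL_Umat : actSL Umat = 1 :=
  MulEquiv.ext fun v => by revert v; decide

theorem center_le_ker_actSL : Subgroup.center SL2Z4 ≤ actSL.ker := by
  intro g hg
  rcases mem_center_SL2Z4_iff.1 hg with rfl | rfl
  exacts [map_one _, actSL_Umat]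

def actPSL : PSL2Z4 →* MulAut (Multiplicative V2) :=
  QuotientGroup.lift _ actSL center_le_ker_actSL

def toPSLSemidirect :
    Multiplicative V2 ⋊[actSL] SL2Z4 →* Multiplicative V2 ⋊[actPSL] PSL2Z4 :=
  map (MonoidHom.id _) (QuotientGroup.mk' _) fun _ => rfl

theorem toPSLSemidirect_surjective : Function.Surjective toPSLSemidirect :=
  map_surjective _ (fun x => ⟨x, rfl⟩) (QuotientGroup.mk'_surjective _)

theorem toPSLSemidirect_inr_Umat : toPSLSemidirect (inr Umat) = 1 :=
  SemidirectProduct.ext rfl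
    ((QuotientGroup.eq_one_iff Umat).2 (mem_center_SL2Z4_iff.2 (Or.inr rfl)))

theorem closure_stdBasis_V2 :
    Subgroup.closure {(.ofAdd ![1, 0] : Multiplicative V2), .ofAdd ![0, 1]} = ⊤ := by
  have := Subgroup.closure_eq_top_of_forall_mem_iterate
    ({.ofAdd ![1, 0], .ofAdd ![0, 1]} : Finset (Multiplicative V2)) 2 (by decide)
  rwa [Finset.coe_pair] at this

namespace MCP

def semidirectGen : Fin 5 → Multiplicative V2 ⋊[actSL] SL2Z4 :=
  ![inl (.ofAdd ![1, 0]), inl (.ofAdd ![0, 1]), inr Umat, inr Smat, inr Tmat]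

theorem closure_range_semidirectGen : Subgroup.closure (Set.range semidirectGen) = ⊤ := by
  refine eq_top_iff.2 ((closure_image_inl_union_image_inr closure_stdBasis_V2
    closure_Smat_Tmat).ge.trans (Subgroup.closure_mono ?_))
  rintro _ ((⟨_, (rfl | rfl), rfl⟩) | (⟨_, (rfl | rfl), rfl⟩))
  exacts [⟨0, rfl⟩, ⟨1, rfl⟩, ⟨3, rfl⟩, ⟨4, rfl⟩]

theorem lift_semidirectGen_of_mem_mcpRels {N : ℕ} {r : FreeGroup (Fin 5)} (hr : r ∈ mcpRels N) :
    r = FreeGroup.of 2 ^ N ∨ FreeGroup.lift semidirectGen r = 1 := by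
  have hsq : semidirectGen 0 ^ 2 = 1 ∧ semidirectGen 1 ^ 2 = 1 := by decide
  simp only [mcpRels, Set.mem_insert_iff, Set.mem_singleton_iff] at hr
  rcases hr with rfl | rfl | rfl | rfl | rfl | rfl | rfl | rfl | rfl | rfl | rfl | rfl | rfl |
    rfl | rfl
  all_goals first
    | exact Or.inl rfl
    | exact Or.inr (by
        simp only [map_mul, map_inv, map_pow, pow_mul, FreeGroup.lift_apply_of, hsq, one_pow] <;>
        decide)

section Lift

variable {N : ℕ} {X : Type*} [Group X]

/-- `G̃_N → (ℤ/2)² ⋊ SL₂(ℤ/4)` followed by `τ`; of the relators only `U^N` depends on `τ`. -/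
def homOfSemidirect (τ : Multiplicative V2 ⋊[actSL] SL2Z4 →* X) (hτ : τ (inr Umat) ^ N = 1) :
    MCP N →* X :=
  PresentedGroup.toGroup (f := τ ∘ semidirectGen) fun r hr => by
    rw [show FreeGroup.lift (τ ∘ semidirectGen) = τ.comp (FreeGroup.lift semidirectGen) from
      FreeGroup.ext_hom _ _ fun _ => by simp]
    rcases lift_semidirectGen_of_mem_mcpRels hr with rfl | h
    · simpa [semidirectGen] using hτ
    · rw [MonoidHom.comp_apply, h, map_one]

variable (τ : Multiplicative V2 ⋊[actSL] SL2Z4 →* X) (hτ : τ (inr Umat) ^ N = 1)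

theorem homOfSemidirect_of (i : Fin 5) :
    homOfSemidirect τ hτ (PresentedGroup.of i) = τ (semidirectGen i) :=
  PresentedGroup.toGroup.of _

theorem ksub_le_ker_homOfSemidirect : Ksub N ≤ (homOfSemidirect τ hτ).ker := by
  have h : semidirectGen 0 ^ 2 = 1 ∧ semidirectGen 1 ^ 2 = 1 ∧ semidirectGen 2 ^ 2 = 1 := by
    decide
  refine Subgroup.normalClosure_le_normal ?_
  rintro _ (rfl | rfl | rfl) <;>
    simp only [SetLike.mem_coe, MonoidHom.mem_ker, mu₁, mu₂, mU, map_mul, map_inv, map_pow,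
      homOfSemidirect_of] <;>
    simp only [← map_pow, h, map_one, inv_one, mul_one]

theorem homOfSemidirect_surjective (hsurj : Function.Surjective τ) :
    Function.Surjective (homOfSemidirect τ hτ) := by
  rw [← MonoidHom.range_eq_top, MonoidHom.range_eq_map, ← PresentedGroup.closure_range_of,
    MonoidHom.map_closure, ← Set.range_comp,
    show ⇑(homOfSemidirect τ hτ) ∘ PresentedGroup.of = τ ∘ semidirectGen from
      funext (homOfSemidirect_of τ hτ), Set.range_comp]
  exact Subgroup.closure_image_eq_top hsurj closure_range_semidirectGen

def quotHomOfSemidirect : MCP N ⧸ Ksub N →* X :=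
  QuotientGroup.lift _ (homOfSemidirect τ hτ) (ksub_le_ker_homOfSemidirect τ hτ)

theorem quotHomOfSemidirect_surjective (hsurj : Function.Surjective τ) :
    Function.Surjective (quotHomOfSemidirect τ hτ) :=
  QuotientGroup.lift_surjective_of_surjective _ _ (homOfSemidirect_surjective τ hτ hsurj) _

end Lift

section Quotient

variable {N : ℕ}

def quotGen (N : ℕ) (i : Fin 5) : MCP N ⧸ Ksub N := (PresentedGroup.of i : MCP N)

theorem closure_range_quotGen : Subgroup.closure (Set.range (quotGen N)) = ⊤ := by
  rw [show quotGen N = QuotientGroup.mk' (Ksub N) ∘ PresentedGroup.of from rfl, Set.range_comp]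
  exact Subgroup.closure_image_eq_top (QuotientGroup.mk'_surjective _)
    (PresentedGroup.closure_range_of _)

theorem lift_quotGen_of_mem_mcpRels {r : FreeGroup (Fin 5)} (hr : r ∈ mcpRels N) :
    FreeGroup.lift (quotGen N) r = 1 := by
  rw [show FreeGroup.lift (quotGen N) = (QuotientGroup.mk' (Ksub N)).comp (PresentedGroup.mk _)
    from FreeGroup.ext_hom _ _ fun _ => by simp [quotGen, PresentedGroup.of],
    MonoidHom.comp_apply, PresentedGroup.one_of_mem hr, map_one]

theorem quotGen_relations :
    quotGen N 0 ^ 2 = 1 ∧ quotGen N 1 ^ 2 = 1 ∧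
    quotGen N 0 * quotGen N 1 = quotGen N 1 * quotGen N 0 ∧
    quotGen N 3 * quotGen N 0 = quotGen N 1 * quotGen N 3 ∧
    quotGen N 3 * quotGen N 1 = quotGen N 0 * quotGen N 3 ∧
    quotGen N 4 * quotGen N 0 = quotGen N 0 * quotGen N 1 * quotGen N 4 ∧
    quotGen N 4 * quotGen N 1 = quotGen N 1 * quotGen N 4 ∧
    quotGen N 3 ^ 2 = quotGen N 2 ∧ (quotGen N 3 * quotGen N 4) ^ 3 = quotGen N 2 ∧
    quotGen N 4 ^ 4 = 1 ∧ quotGen N 2 ^ 2 = 1 ∧ quotGen N 2 ^ N = 1 := by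
  have hK : ∀ x ∈ ({mu₁ N ^ 2, mu₂ N ^ 2, mU N ^ 2 * (mu₂ N ^ 2)⁻¹ * (mu₁ N ^ 2)⁻¹} :
      Set (MCP N)), (x : MCP N ⧸ Ksub N) = 1 :=
    fun x hx => (QuotientGroup.eq_one_iff x).2 (Subgroup.subset_normalClosure hx)
  simp only [Set.forall_mem_insert, Set.mem_singleton_iff, forall_eq, QuotientGroup.mk_mul,
    QuotientGroup.mk_inv, QuotientGroup.mk_pow] at hK
  obtain ⟨ha, hb, hc⟩ : quotGen N 0 ^ 2 = 1 ∧ quotGen N 1 ^ 2 = 1 ∧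
      quotGen N 2 ^ 2 * (quotGen N 1 ^ 2)⁻¹ * (quotGen N 0 ^ 2)⁻¹ = 1 := hK
  rw [ha, hb, inv_one, mul_one, mul_one] at hc
  have hrels := fun r (hr : r ∈ mcpRels N) => lift_quotGen_of_mem_mcpRels hr
  simp only [mcpRels, Set.forall_mem_insert, Set.mem_singleton_iff, forall_eq, map_mul, map_inv,
    map_pow, FreeGroup.lift_apply_of, mul_inv_eq_one] at hrels
  obtain ⟨hab, hac, -, -, -, hcN, hda, hdb, -, hea, heb, -, hd, hde, he⟩ := hrels
  simp only [mul_inv_eq_iff_eq_mul] at hab hac hda hdb hea heb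
  have hb_inv : (quotGen N 1)⁻¹ = quotGen N 1 := inv_eq_of_mul_eq_one_right (by rw [← sq, hb])
  have hc_inv : (quotGen N 2)⁻¹ = quotGen N 2 := inv_eq_of_mul_eq_one_right (by rw [← sq, hc])
  rw [hc, one_mul, hb_inv, pow_succ, hb, one_mul] at hab
  rw [hc_inv, ha, mul_one] at hac
  rw [hc_inv, mul_assoc _ (quotGen N 0), hac, ← mul_assoc, ← sq, hc, one_mul] at hdb
  rw [hb_inv] at hea
  replace hd := (eq_inv_of_mul_eq_one_left hd).trans hc_inv
  replace hde := (eq_inv_of_mul_eq_one_left hde).trans hc_inv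
  rw [hb] at he
  exact ⟨ha, hb, hab, hda, hdb, hea, heb, hd, hde, he, hc, hcN⟩

theorem closure_quotGen_eq_top :
    Subgroup.closure {quotGen N 0, quotGen N 3, quotGen N 4} = ⊤ := by
  obtain ⟨-, -, -, hda, -, -, -, hd, -⟩ := quotGen_relations (N := N)
  set H := Subgroup.closure {quotGen N 0, quotGen N 3, quotGen N 4}
  have h0 : quotGen N 0 ∈ H := Subgroup.subset_closure (by simp)
  have h3 : quotGen N 3 ∈ H := Subgroup.subset_closure (by simp)
  have h4 : quotGen N 4 ∈ H := Subgroup.subset_closure (by simp)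
  have h1 : quotGen N 1 ∈ H :=
    eq_mul_inv_of_mul_eq hda.symm ▸ mul_mem (mul_mem h3 h0) (inv_mem h3)
  have h2 : quotGen N 2 ∈ H := hd ▸ pow_mem h3 2
  rw [eq_top_iff, ← closure_range_quotGen, Subgroup.closure_le]
  rintro _ ⟨i, rfl⟩
  fin_cases i
  exacts [h0, h1, h2, h3, h4]

theorem finite_and_card_quot_le {n : ℕ}
    (hH : Finite (Subgroup.closure {quotGen N 3, quotGen N 4}) ∧
      Nat.card (Subgroup.closure {quotGen N 3, quotGen N 4}) ≤ n) :
    Finite (MCP N ⧸ Ksub N) ∧ Nat.card (MCP N ⧸ Ksub N) ≤ 4 * n :=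
  let ⟨ha, hb, hab, hda, hdb, hea, heb, _⟩ := quotGen_relations (N := N)
  finite_and_card_le_four_mul closure_quotGen_eq_top ha hb hab hda hdb hea heb hH

theorem finite_and_card_closure_quotGen_le_48 :
    Finite (Subgroup.closure {quotGen N 3, quotGen N 4}) ∧
      Nat.card (Subgroup.closure {quotGen N 3, quotGen N 4}) ≤ 48 := by
  obtain ⟨-, -, -, -, -, -, -, hd, hde, he, hc, -⟩ := quotGen_relations (N := N)
  exact finite_and_card_closure_le_48 ((pow_mul _ 2 2).trans (by rw [hd, hc])) he
    (by rw [hde, hd])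

theorem finite_and_card_closure_quotGen_le_24 (hN : Odd N) :
    Finite (Subgroup.closure {quotGen N 3, quotGen N 4}) ∧
      Nat.card (Subgroup.closure {quotGen N 3, quotGen N 4}) ≤ 24 := by
  obtain ⟨-, -, -, -, -, -, -, hd, hde, he, hc, hcN⟩ := quotGen_relations (N := N)
  have hc_one : quotGen N 2 = 1 := by
    obtain ⟨k, rfl⟩ := hN
    rwa [pow_succ, pow_mul, hc, one_pow, one_mul] at hcN
  exact finite_and_card_closure_le_24 (hd.trans hc_one) he (hde.trans hc_one)

end Quotient

end MCP

theorem quotient_by_K_general (N : ℕ) :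
    (Even N → Nonempty ((MCP N ⧸ Ksub N) ≃* (Multiplicative V2 ⋊[actSL] SL2Z4))) ∧
    (Odd N → ∃ ψ : PSL2Z4 →* MulAut (Multiplicative V2),
      (∀ g : SL2Z4, ψ (QuotientGroup.mk g) = actSL g) ∧
      Nonempty ((MCP N ⧸ Ksub N) ≃* (Multiplicative V2 ⋊[ψ] PSL2Z4))) := by
  have hV2 : Nat.card (Multiplicative V2) = 4 := by rw [Nat.card_eq_fintype_card]; rfl
  refine ⟨fun hN => ?_, fun hN => ⟨actPSL, fun _ => rfl, ?_⟩⟩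
  · have hτ : (inr Umat : Multiplicative V2 ⋊[actSL] SL2Z4) ^ N = 1 := by
      obtain ⟨k, rfl⟩ := hN
      rw [← two_mul, pow_mul, show (inr Umat : Multiplicative V2 ⋊[actSL] SL2Z4) ^ 2 = 1 by decide,
        one_pow]
    refine nonempty_mulEquiv_of_surjective (MCP.quotHomOfSemidirect (MonoidHom.id _) hτ)
      (MCP.quotHomOfSemidirect_surjective _ _ fun x => ⟨x, rfl⟩) ?_
    rw [SemidirectProduct.card, hV2, card_SL2Z4]
    exact MCP.finite_and_card_quot_le MCP.finite_and_card_closure_quotGen_le_48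
  · have hτ : toPSLSemidirect (inr Umat) ^ N = 1 := by rw [toPSLSemidirect_inr_Umat, one_pow]
    refine nonempty_mulEquiv_of_surjective (MCP.quotHomOfSemidirect toPSLSemidirect hτ)
      (MCP.quotHomOfSemidirect_surjective _ _ toPSLSemidirect_surjective) ?_
    rw [SemidirectProduct.card, hV2, card_PSL2Z4]
    exact MCP.finite_and_card_quot_le (MCP.finite_and_card_closure_quotGen_le_24 hN)

/-- For `K` the normal subgroup of `G̃_N` generated by `u₁²`, `u₂²`, `U²u₂⁻²u₁⁻²`:
if `N` is even then `G̃_N/K ≅ (ℤ/2)² ⋊ SL₂(ℤ/4)`, and if `N` is odd then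
`G̃_N/K ≅ (ℤ/2)² ⋊ PSL₂(ℤ/4)`, the action being mod-2 reduction followed by matrix
multiplication on column vectors. -/
theorem quotient_by_K (N : ℕ) (hN : 2 ≤ N) :
    (Even N → Nonempty ((MCP N ⧸ Ksub N) ≃* (Multiplicative V2 ⋊[actSL] SL2Z4))) ∧
    (Odd N → ∃ ψ : PSL2Z4 →* MulAut (Multiplicative V2),
      (∀ g : SL2Z4, ψ (QuotientGroup.mk g) = actSL g) ∧
      Nonempty ((MCP N ⧸ Ksub N) ≃* (Multiplicative V2 ⋊[ψ] PSL2Z4))) :=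
  quotient_by_K_general N
end

section
/- In G_N: if N = 2 then the three subgroups H, H_l, H_r coincide and are all equal to ⟨V₀, V₁, V₂⟩; if N ≥ 3 then H, H_l, H_r are pairwise distinct subgroups of G_N. -/
def cpRels : Set (FreeGroup (Fin 3)) :=
  { FreeGroup.of 0 * FreeGroup.of 1 * (FreeGroup.of 0)⁻¹ *
      ((FreeGroup.of 2) ^ 2 * ((FreeGroup.of 1)⁻¹) ^ 3)⁻¹,
    FreeGroup.of 0 * FreeGroup.of 2 * (FreeGroup.of 0)⁻¹ *
      ((FreeGroup.of 2)⁻¹ * (FreeGroup.of 0) ^ 2)⁻¹,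
    FreeGroup.of 1 * FreeGroup.of 2 * (FreeGroup.of 1)⁻¹ *
      ((FreeGroup.of 2)⁻¹ * (FreeGroup.of 1) ^ 2)⁻¹ }

def cpRelsN (N : ℕ) : Set (FreeGroup (Fin 3)) :=
  cpRels ∪ {(FreeGroup.of 0) ^ (2 * N), (FreeGroup.of 1) ^ (2 * N), (FreeGroup.of 2) ^ N}

/-- The `N`-state chiral Potts group `G_N`. -/
abbrev CPN (N : ℕ) := PresentedGroup (cpRelsN N)

def u₁N (N : ℕ) : CPN N := PresentedGroup.of 0
def u₂N (N : ℕ) : CPN N := PresentedGroup.of 1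
def UN (N : ℕ) : CPN N := PresentedGroup.of 2

def V₀ (N : ℕ) : CPN N := UN N ^ 2 * (u₂N N ^ 2)⁻¹ * (u₁N N ^ 2)⁻¹
def V₁ (N : ℕ) : CPN N := u₁N N ^ 2
def V₂ (N : ℕ) : CPN N := u₂N N ^ 2

def Hsub (N : ℕ) : Subgroup (CPN N) := Subgroup.closure {V₀ N, V₁ N}
def Hl (N : ℕ) : Subgroup (CPN N) := Subgroup.closure {V₀ N, V₂ N}
def Hr (N : ℕ) : Subgroup (CPN N) := Subgroup.closure {V₁ N, V₂ N}

/-! When `N = 2` the relation `U ^ N = 1` gives `V₀ V₁ V₂ = U² = 1`, so any two of the `Vᵢ`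
generate the third. When `N ≥ 3`, the homomorphisms onto the dihedral group of order `2N` given by
`u₁, u₂, U ↦ s, sr, r` and `u₁, u₂, U ↦ s, r, r` kill `H_r` and `H` respectively but send
`V₀`, respectively `V₂`, to `r² ≠ 1`; this separates the three subgroups. -/

section ClosureOfProductOne

variable {G : Type*} [Group G]

theorem Subgroup.closure_pair_eq_closure_triple_of_mul_mul_eq_one {a b c : G}
    (h : a * b * c = 1) :
    Subgroup.closure {a, b} = Subgroup.closure {a, b, c} ∧
      Subgroup.closure {a, c} = Subgroup.closure {a, b, c} ∧
      Subgroup.closure {b, c} = Subgroup.closure {a, b, c} := by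
  have ha : a = (b * c)⁻¹ := eq_inv_of_mul_eq_one_left (by rwa [← mul_assoc])
  have hb : b = a⁻¹ * c⁻¹ :=
    calc b = a⁻¹ * (a * b * c) * c⁻¹ := by group
      _ = a⁻¹ * c⁻¹ := by rw [h, mul_one]
  have hc : c = (a * b)⁻¹ := eq_inv_of_mul_eq_one_right h
  have sub {x y : G} (hx : x ∈ ({a, b, c} : Set G)) (hy : y ∈ ({a, b, c} : Set G)) :
      ({x, y} : Set G) ⊆ {a, b, c} := Set.insert_subset hx (Set.singleton_subset_iff.mpr hy)
  have mem {x : G} {s : Set G} (hx : x ∈ s) : x ∈ Subgroup.closure s :=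
    Subgroup.subset_closure hx
  refine ⟨le_antisymm (Subgroup.closure_mono (sub (by simp) (by simp))) ?_,
    le_antisymm (Subgroup.closure_mono (sub (by simp) (by simp))) ?_,
    le_antisymm (Subgroup.closure_mono (sub (by simp) (by simp))) ?_⟩ <;>
    rw [Subgroup.closure_le, Set.insert_subset_iff, Set.insert_subset_iff,
      Set.singleton_subset_iff]
  · exact ⟨mem (by simp), mem (by simp), hc ▸ inv_mem (mul_mem (mem (by simp)) (mem (by simp)))⟩
  · exact ⟨mem (by simp), hb ▸ mul_mem (inv_mem (mem (by simp))) (inv_mem (mem (by simp))),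
      mem (by simp)⟩
  · exact ⟨ha ▸ inv_mem (mul_mem (mem (by simp)) (mem (by simp))), mem (by simp), mem (by simp)⟩

end ClosureOfProductOne

namespace DihedralGroup

variable {n : ℕ}

theorem sr_pow_two_mul (i : ZMod n) (k : ℕ) : sr i ^ (2 * k) = 1 := by
  rw [pow_mul, sq, sr_mul_self, one_pow]

theorem r_one_pow_two_ne_one (hn : 3 ≤ n) : (r 1 : DihedralGroup n) ^ 2 ≠ 1 :=
  pow_ne_one_of_lt_orderOf two_ne_zero (by rw [orderOf_r_one]; omega)

end DihedralGroup

open DihedralGroup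

namespace CPN

variable {N : ℕ} {G : Type*} [Group G]

def lift (x y z : G) (h₁ : x * y * x⁻¹ = z ^ 2 * y⁻¹ ^ 3) (h₂ : x * z * x⁻¹ = z⁻¹ * x ^ 2)
    (h₃ : y * z * y⁻¹ = z⁻¹ * y ^ 2) (hx : x ^ (2 * N) = 1) (hy : y ^ (2 * N) = 1)
    (hz : z ^ N = 1) : CPN N →* G :=
  PresentedGroup.toGroup (f := ![x, y, z]) <| by
    rintro w (hw | hw) <;> simp only [cpRels, Set.mem_insert_iff, Set.mem_singleton_iff] at hw <;>
      rcases hw with rfl | rfl | rfl <;> simp [*]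

section

variable {x y z : G} {h₁ : x * y * x⁻¹ = z ^ 2 * y⁻¹ ^ 3} {h₂ : x * z * x⁻¹ = z⁻¹ * x ^ 2}
    {h₃ : y * z * y⁻¹ = z⁻¹ * y ^ 2} {hx : x ^ (2 * N) = 1} {hy : y ^ (2 * N) = 1}
    {hz : z ^ N = 1}

@[simp]
theorem lift_u₁N : lift x y z h₁ h₂ h₃ hx hy hz (u₁N N) = x := PresentedGroup.toGroup.of _

@[simp]
theorem lift_u₂N : lift x y z h₁ h₂ h₃ hx hy hz (u₂N N) = y := PresentedGroup.toGroup.of _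

@[simp]
theorem lift_UN : lift x y z h₁ h₂ h₃ hx hy hz (UN N) = z := PresentedGroup.toGroup.of _

end

theorem V₀_mul_V₁_mul_V₂ : V₀ N * V₁ N * V₂ N = UN N ^ 2 := by
  simp [V₀, V₁, V₂, mul_assoc]

theorem UN_pow : UN N ^ N = 1 :=
  PresentedGroup.one_of_mem (Or.inr (by simp))

def toDihedral₀ : CPN N →* DihedralGroup N :=
  lift (sr 0) (sr 1) (r 1) (by simp [pow_succ, inv_sr]) (by simp [pow_succ, inv_r])
    (by simp [pow_succ, inv_r]) (sr_pow_two_mul _ _) (sr_pow_two_mul _ _) r_one_pow_n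

def toDihedral₂ : CPN N →* DihedralGroup N :=
  lift (sr 0) (r 1) (r 1) (by simp [pow_succ, inv_r]; ring) (by simp [pow_succ, inv_r])
    (by simp [pow_succ, inv_r]) (sr_pow_two_mul _ _) (by rw [pow_mul', r_one_pow_n, one_pow])
    r_one_pow_n

theorem Hr_le_ker_toDihedral₀ : Hr N ≤ toDihedral₀.ker := by
  rw [Hr, Subgroup.closure_le]
  rintro _ (rfl | rfl) <;> simp [toDihedral₀, V₁, V₂, sq]

theorem Hsub_le_ker_toDihedral₂ : Hsub N ≤ toDihedral₂.ker := by
  rw [Hsub, Subgroup.closure_le]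
  rintro _ (rfl | rfl) <;> simp [toDihedral₂, V₀, V₁, sq, inv_r]

theorem V₀_notMem_Hr (hN : 3 ≤ N) : V₀ N ∉ Hr N := fun h ↦
  r_one_pow_two_ne_one hN <| by
    simpa [toDihedral₀, V₀, sq, inv_sr] using Hr_le_ker_toDihedral₀ h

theorem V₂_notMem_Hsub (hN : 3 ≤ N) : V₂ N ∉ Hsub N := fun h ↦
  r_one_pow_two_ne_one hN <| by simpa [toDihedral₂, V₂] using Hsub_le_ker_toDihedral₂ h

end CPN

open CPN in
theorem H_Hl_Hr_general (N : ℕ) :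
    (N = 2 → Hsub N = Hl N ∧ Hl N = Hr N ∧
      Hsub N = Subgroup.closure {V₀ N, V₁ N, V₂ N}) ∧
    (3 ≤ N → Hsub N ≠ Hl N ∧ Hsub N ≠ Hr N ∧ Hl N ≠ Hr N) := by
  constructor
  · rintro rfl
    obtain ⟨h01, h02, h12⟩ :=
      Subgroup.closure_pair_eq_closure_triple_of_mul_mul_eq_one (V₀_mul_V₁_mul_V₂.trans UN_pow)
    exact ⟨h01.trans h02.symm, h02.trans h12.symm, h01⟩
  · intro hN
    have hV₀ : V₀ N ∈ Hsub N ⊓ Hl N :=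
      ⟨Subgroup.subset_closure (by simp), Subgroup.subset_closure (by simp)⟩
    have hV₂ : V₂ N ∈ Hl N := Subgroup.subset_closure (by simp)
    exact ⟨fun h ↦ V₂_notMem_Hsub hN (h ▸ hV₂), fun h ↦ V₀_notMem_Hr hN (h ▸ hV₀.1),
      fun h ↦ V₀_notMem_Hr hN (h ▸ hV₀.2)⟩

/-- If `N = 2` the subgroups `H`, `H_l`, `H_r` of `G_N` coincide and equal
`⟨V₀, V₁, V₂⟩`; if `N ≥ 3` they are pairwise distinct. -/
theorem H_Hl_Hr (N : ℕ) (hN : 2 ≤ N) :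
    (N = 2 → Hsub N = Hl N ∧ Hl N = Hr N ∧
      Hsub N = Subgroup.closure {V₀ N, V₁ N, V₂ N}) ∧
    (3 ≤ N → Hsub N ≠ Hl N ∧ Hsub N ≠ Hr N ∧ Hl N ≠ Hr N) :=
  H_Hl_Hr_general N
end

section
/- Let N ≥ 2 and let (a,b,c,d) ∈ ℂ⁴ be a nonzero quadruple. Then a^(2N) + c^(2N) = b^(2N) + d^(2N) holds if and only if there exists a nonzero triple (k', k, l) ∈ ℂ³ with k'² + k² = l² such that k·a^N + k'·c^N = l·d^N, k·b^N + k'·d^N = l·c^N, l·a^N + k'·b^N = k·d^N, and k'·a^N + l·b^N = k·c^N. (This expresses that the degree-2N Fermat hypersurface in ℙ³ is the union of the rapidity curves of the N-state chiral Potts model over all parameters, including the degenerate ones.) -/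
/-!
Write `A, B, C, D` for `a^N, b^N, c^N, d^N`, so that the Fermat equation reads
`A² + C² = B² + D²`. Eliminating between the four rapidity equations gives
`k (A² + C²) = k (B² + D²)`, and `k'² (A² + C²) = k'² (B² + D²)` once `k = 0` and the modulus
relation are used, so every point of a rapidity curve lies on the Fermat surface.
Conversely, on the Fermat surface each of the triples
`(BD - AC, C² - D², BC - AD)` and `(A² - D², -(AC + BD), -(AB + CD))` solves all five
equations, and they vanish simultaneously only at `A = B = C = D = 0`.
-/

section

variable {K : Type*} [CommRing K]

def IsOnRapidityCurve (k' k l A B C D : K) : Prop :=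
  k' ^ 2 + k ^ 2 = l ^ 2 ∧
    k * A + k' * C = l * D ∧
    k * B + k' * D = l * C ∧
    l * A + k' * B = k * D ∧
    k' * A + l * B = k * C

theorem sq_add_sq_eq_of_isOnRapidityCurve [IsDomain K] {k' k l A B C D : K}
    (hne : ¬(k' = 0 ∧ k = 0 ∧ l = 0)) (h : IsOnRapidityCurve k' k l A B C D) :
    A ^ 2 + C ^ 2 = B ^ 2 + D ^ 2 := by
  obtain ⟨hkl, h1, h2, h3, h4⟩ := h
  by_cases hk : k = 0
  · subst hk
    have hk' : k' ≠ 0 := by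
      rintro rfl
      exact hne ⟨rfl, rfl, eq_zero_of_pow_eq_zero (n := 2) (by linear_combination -hkl)⟩
    refine mul_left_cancel₀ (pow_ne_zero 2 hk') ?_
    linear_combination (l * A - k' * B) * h3 + (A ^ 2 - D ^ 2) * hkl + (k' * C + l * D) * h1
  · refine mul_left_cancel₀ hk ?_
    linear_combination A * h1 - C * h4 + D * h3 - B * h2

variable {A B C D : K}

theorem isOnRapidityCurve_of_sq_add_sq_eq (hF : A ^ 2 + C ^ 2 = B ^ 2 + D ^ 2) :
    IsOnRapidityCurve (B * D - A * C) (C ^ 2 - D ^ 2) (B * C - A * D) A B C D := by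
  refine ⟨?_, ?_, ?_, ?_, ?_⟩
  · linear_combination (C ^ 2 - D ^ 2) * hF
  · ring
  · ring
  · linear_combination (-D) * hF
  · linear_combination (-C) * hF

theorem isOnRapidityCurve_of_sq_add_sq_eq' (hF : A ^ 2 + C ^ 2 = B ^ 2 + D ^ 2) :
    IsOnRapidityCurve (A ^ 2 - D ^ 2) (-(A * C + B * D)) (-(A * B + C * D)) A B C D := by
  refine ⟨?_, ?_, ?_, ?_, ?_⟩
  · linear_combination (A ^ 2 - D ^ 2) * hF
  · ring
  · linear_combination D * hF
  · ring
  · linear_combination A * hF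

theorem eq_zero_of_rapidity_moduli_eq_zero [IsDomain K] [NeZero (2 : K)]
    (hF : A ^ 2 + C ^ 2 = B ^ 2 + D ^ 2)
    (h₁ : B * D - A * C = 0 ∧ C ^ 2 - D ^ 2 = 0 ∧ B * C - A * D = 0)
    (h₂ : A ^ 2 - D ^ 2 = 0 ∧ -(A * C + B * D) = 0) :
    A = 0 ∧ B = 0 ∧ C = 0 ∧ D = 0 := by
  obtain ⟨hBD, hCD, -⟩ := h₁
  obtain ⟨hAD, hACBD⟩ := h₂
  have hAC : A * C = 0 :=
    mul_left_cancel₀ (NeZero.ne (2 : K)) (by linear_combination -hACBD - hBD)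
  -- `D⁴ = A²C² = 0`, since `A² = C² = D²`.
  have hD : D = 0 := eq_zero_of_pow_eq_zero (n := 4) <| by
    linear_combination (-C ^ 2) * hAD - D ^ 2 * hCD + A * C * hAC
  subst hD
  have hA : A = 0 := eq_zero_of_pow_eq_zero (n := 2) (by linear_combination hAD)
  have hC : C = 0 := eq_zero_of_pow_eq_zero (n := 2) (by linear_combination hCD)
  subst hA hC
  exact ⟨rfl, eq_zero_of_pow_eq_zero (n := 2) (by linear_combination -hF), rfl, rfl⟩

theorem exists_isOnRapidityCurve_of_sq_add_sq_eq [IsDomain K] [NeZero (2 : K)]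
    (hne : ¬(A = 0 ∧ B = 0 ∧ C = 0 ∧ D = 0)) (hF : A ^ 2 + C ^ 2 = B ^ 2 + D ^ 2) :
    ∃ k' k l : K, ¬(k' = 0 ∧ k = 0 ∧ l = 0) ∧ IsOnRapidityCurve k' k l A B C D := by
  by_cases h₁ : B * D - A * C = 0 ∧ C ^ 2 - D ^ 2 = 0 ∧ B * C - A * D = 0
  · refine ⟨_, _, _, fun h₂ => hne ?_, isOnRapidityCurve_of_sq_add_sq_eq' hF⟩
    exact eq_zero_of_rapidity_moduli_eq_zero hF h₁ ⟨h₂.1, h₂.2.1⟩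
  · exact ⟨_, _, _, h₁, isOnRapidityCurve_of_sq_add_sq_eq hF⟩

end

theorem fermat_eq_union_of_rapidity_curves_general (N : ℕ) (a b c d : ℂ)
    (habcd : ¬(a = 0 ∧ b = 0 ∧ c = 0 ∧ d = 0)) :
    a ^ (2 * N) + c ^ (2 * N) = b ^ (2 * N) + d ^ (2 * N) ↔
      ∃ k' k l : ℂ, ¬(k' = 0 ∧ k = 0 ∧ l = 0) ∧
        k' ^ 2 + k ^ 2 = l ^ 2 ∧
        k * a ^ N + k' * c ^ N = l * d ^ N ∧
        k * b ^ N + k' * d ^ N = l * c ^ N ∧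
        l * a ^ N + k' * b ^ N = k * d ^ N ∧
        k' * a ^ N + l * b ^ N = k * c ^ N := by
  simp only [pow_mul' _ 2 N]
  have hne : ¬(a ^ N = 0 ∧ b ^ N = 0 ∧ c ^ N = 0 ∧ d ^ N = 0) := fun ⟨ha, hb, hc, hd⟩ =>
    habcd ⟨eq_zero_of_pow_eq_zero ha, eq_zero_of_pow_eq_zero hb, eq_zero_of_pow_eq_zero hc,
      eq_zero_of_pow_eq_zero hd⟩
  exact ⟨exists_isOnRapidityCurve_of_sq_add_sq_eq hne,
    fun ⟨_, _, _, hmod, hcurve⟩ => sq_add_sq_eq_of_isOnRapidityCurve hmod hcurve⟩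

/-- A nonzero quadruple `(a,b,c,d) ∈ ℂ⁴` lies on the degree-`2N` Fermat hypersurface
`a^(2N) + c^(2N) = b^(2N) + d^(2N)` if and only if there is a nonzero triple
`(k',k,l) ∈ ℂ³` with `k'² + k² = l²` such that the four (projective) chiral Potts
rapidity equations `k·a^N + k'·c^N = l·d^N`, `k·b^N + k'·d^N = l·c^N`,
`l·a^N + k'·b^N = k·d^N`, `k'·a^N + l·b^N = k·c^N` hold. -/
theorem fermat_eq_union_of_rapidity_curves (N : ℕ) (hN : 2 ≤ N) (a b c d : ℂ)
    (habcd : ¬(a = 0 ∧ b = 0 ∧ c = 0 ∧ d = 0)) :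
    a ^ (2 * N) + c ^ (2 * N) = b ^ (2 * N) + d ^ (2 * N) ↔
      ∃ k' k l : ℂ, ¬(k' = 0 ∧ k = 0 ∧ l = 0) ∧
        k' ^ 2 + k ^ 2 = l ^ 2 ∧
        k * a ^ N + k' * c ^ N = l * d ^ N ∧
        k * b ^ N + k' * d ^ N = l * c ^ N ∧
        l * a ^ N + k' * b ^ N = k * d ^ N ∧
        k' * a ^ N + l * b ^ N = k * c ^ N :=
  fermat_eq_union_of_rapidity_curves_general N a b c d habcd
end

section
/- Let N ≥ 2, ω = exp(2πi/N), ω^(1/2) = exp(πi/N), ω^(1/4) = exp(πi/(2N)). Suppose k, k' ∈ ℂ satisfy k² + k'² = 1 and the quadruple (a,b,c,d) ∈ ℂ⁴ lies on 𝔚_{k',k}. Then: (i) the quadruples (ω^(1/2)d, c, b, ω^(1/2)a), (b, ωa, d, c) and (ωa, b, c, d) all lie on 𝔚_{k',k}; (ii) the quadruple (ω^(−1/2)a, d, c, b) lies on 𝔚_{k,k'}; (iii) if k' ≠ 0, then (1/k')² + (ik/k')² = 1 and the quadruple (ω^(1/4)a, ω^(1/4)b, d, c) lies on 𝔚_{1/k',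 ik/k'}. -/
/-! Each symmetry rescales some coordinates by a constant `u` and permutes them, so on the
`N`-th powers it acts linearly through `u ^ N` alone; the three roots of unity have
`ω ^ N = 1`, `ω^(1/2) ^ N = -1` and `ω^(1/4) ^ N = i`, and with these values each image
equation is a linear combination of the four defining equations. -/

/-- `(a,b,c,d)` lies on the rapidity curve `𝔚_{k',k}`:
`k·a^N + k'·c^N = d^N`, `k·b^N + k'·d^N = c^N`, `a^N + k'·b^N = k·d^N`,
`k'·a^N + b^N = k·c^N`. -/
def OnW (N : ℕ) (k' k a b c d : ℂ) : Prop :=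
  k * a ^ N + k' * c ^ N = d ^ N ∧
  k * b ^ N + k' * d ^ N = c ^ N ∧
  a ^ N + k' * b ^ N = k * d ^ N ∧
  k' * a ^ N + b ^ N = k * c ^ N

open Complex

theorem Complex.exp_div_natCast_pow (x : ℂ) {n : ℕ} (hn : n ≠ 0) :
    exp (x / n) ^ n = exp x := by
  rw [← exp_nat_mul, mul_div_cancel₀ _ (Nat.cast_ne_zero.mpr hn)]

namespace OnW

variable {N : ℕ} {k k' a b c d u : ℂ}

theorem mul_rotate (hu : u ^ N = -1) (h : OnW N k' k a b c d) :
    OnW N k' k (u * d) c b (u * a) := by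
  obtain ⟨h1, h2, h3, h4⟩ := h
  refine ⟨?_, ?_, ?_, ?_⟩ <;> simp only [mul_pow, hu]
  · linear_combination h3
  · linear_combination -h4
  · linear_combination h1
  · linear_combination -h2

theorem swap_mul (hu : u ^ N = 1) (h : OnW N k' k a b c d) :
    OnW N k' k b (u * a) d c := by
  obtain ⟨h1, h2, h3, h4⟩ := h
  refine ⟨h2, ?_, ?_, ?_⟩ <;> simp only [mul_pow, hu]
  · linear_combination h1
  · linear_combination h4
  · linear_combination h3

theorem mul_left (hu : u ^ N = 1) (h : OnW N k' k a b c d) :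
    OnW N k' k (u * a) b c d := by
  simpa only [OnW, mul_pow, hu, one_mul] using h

theorem mul_reverse (hu : u ^ N = -1) (h : OnW N k' k a b c d) :
    OnW N k k' (u * a) d c b := by
  obtain ⟨h1, h2, h3, h4⟩ := h
  refine ⟨?_, by linear_combination h2, ?_, ?_⟩ <;> simp only [mul_pow, hu]
  · linear_combination -h4
  · linear_combination -h3
  · linear_combination -h1

theorem mul_mul_swap (hk' : k' ≠ 0) (hu : u ^ N = I) (h : OnW N k' k a b c d) :
    OnW N (1 / k') (I * k / k') (u * a) (u * b) d c := by
  obtain ⟨h1, h2, h3, h4⟩ := h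
  refine ⟨?_, ?_, ?_, ?_⟩ <;> simp only [mul_pow, hu] <;> field_simp
  · linear_combination -h1 + k * a ^ N * I_sq
  · linear_combination -h2 + k * b ^ N * I_sq
  · linear_combination h4
  · linear_combination h3

end OnW

theorem one_div_sq_add_I_mul_div_sq_eq_one {k k' : ℂ} (hkk : k ^ 2 + k' ^ 2 = 1) (hk' : k' ≠ 0) :
    (1 / k') ^ 2 + (I * k / k') ^ 2 = 1 := by
  field_simp
  linear_combination -hkk + k ^ 2 * I_sq

/-- The symmetries of the rapidity curves: with `ω = exp(2πi/N)`,
`ω^(1/2) = exp(πi/N)`, `ω^(1/4) = exp(πi/(2N))`, if `(a,b,c,d) ∈ 𝔚_{k',k}` then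
(i) `(ω^(1/2)d, c, b, ω^(1/2)a)`, `(b, ωa, d, c)`, `(ωa, b, c, d) ∈ 𝔚_{k',k}`;
(ii) `(ω^(-1/2)a, d, c, b) ∈ 𝔚_{k,k'}`;
(iii) if `k' ≠ 0` then `(1/k')² + (ik/k')² = 1` and
`(ω^(1/4)a, ω^(1/4)b, d, c) ∈ 𝔚_{1/k', ik/k'}`. -/
theorem rapidity_symmetries (N : ℕ) (hN : 2 ≤ N)
    (ω ωh ωq : ℂ)
    (hω : ω = Complex.exp (2 * Real.pi * Complex.I / N))
    (hωh : ωh = Complex.exp (Real.pi * Complex.I / N))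
    (hωq : ωq = Complex.exp (Real.pi * Complex.I / (2 * N)))
    (k k' : ℂ) (hkk : k ^ 2 + k' ^ 2 = 1)
    (a b c d : ℂ) (h : OnW N k' k a b c d) :
    OnW N k' k (ωh * d) c b (ωh * a) ∧
    OnW N k' k b (ω * a) d c ∧
    OnW N k' k (ω * a) b c d ∧
    OnW N k k' (ωh⁻¹ * a) d c b ∧
    (k' ≠ 0 →
      (1 / k') ^ 2 + (Complex.I * k / k') ^ 2 = 1 ∧
      OnW N (1 / k') (Complex.I * k / k') (ωq * a) (ωq * b) d c) := by
  have hN0 : N ≠ 0 := by omega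
  have hωN : ω ^ N = 1 := by
    rw [hω, exp_div_natCast_pow _ hN0, exp_two_pi_mul_I]
  have hωhN : ωh ^ N = -1 := by
    rw [hωh, exp_div_natCast_pow _ hN0, exp_pi_mul_I]
  have hωqN : ωq ^ N = I := by
    rw [hωq, show (Real.pi * I / (2 * N) : ℂ) = Real.pi / 2 * I / N by ring,
      exp_div_natCast_pow _ hN0, exp_pi_div_two_mul_I]
  have hωhinvN : ωh⁻¹ ^ N = -1 := by rw [inv_pow, hωhN, inv_neg, inv_one]
  exact ⟨h.mul_rotate hωhN, h.swap_mul hωN, h.mul_left hωN, h.mul_reverse hωhinvN,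
    fun hk' => ⟨one_div_sq_add_I_mul_div_sq_eq_one hkk hk', h.mul_mul_swap hk' hωqN⟩⟩
end

section
/- Let N ≥ 2, ω = exp(2πi/N), and let k, k' ∈ ℂ with k² + k'² = 1. Suppose (t, λ) ∈ ℂ² with λ ≠ 0 satisfies k²·t^N = (1 − k'λ)(1 − k'λ⁻¹). Then the pairs (ωt, λ) and (t, λ⁻¹) satisfy the same equation, and if in addition t ≠ 0, λ ≠ k' and k'λ ≠ 1, then the pair (t', λ') := (t⁻¹, (1 − k'λ)/(k' − λ)) satisfies λ' ≠ 0 and k²·t'^N = (1 − k'λ')(1 − k'λ'⁻¹). (These are the generators θ, σ, ι of the ℤ/2 × D_N symmetry of the hyperelliptic curve of the τ⁽²⁾-model.) -/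
/-! The curve equation only sees `t ^ N` and is symmetric under `λ ↦ λ⁻¹`, which gives `θ` and
`σ`. For `ι`, the Möbius map `λ ↦ (1 - k'λ)/(k' - λ)` turns the two factors `1 - k'λ`,
`1 - k'λ⁻¹` into `-k²λ/(k' - λ)` and `k²/(1 - k'λ)` (using `k² + k'² = 1`), so their product
becomes `k⁴/(k² t^N) = k² t^{-N}`. -/

/-- `(t,λ)` lies on the hyperelliptic curve `W_{k',k}`:
`λ ≠ 0` and `k²·t^N = (1 − k'λ)(1 − k'λ⁻¹)`. -/
def OnHyp (N : ℕ) (k' k t l : ℂ) : Prop :=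
  l ≠ 0 ∧ k ^ 2 * t ^ N = (1 - k' * l) * (1 - k' * l⁻¹)

theorem Complex.exp_two_pi_I_div_pow_self (N : ℕ) :
    Complex.exp (2 * Real.pi * Complex.I / N) ^ N = 1 := by
  rcases eq_or_ne N 0 with rfl | hN
  · simp
  · exact (Complex.isPrimitiveRoot_exp N hN).pow_eq_one

section Moebius

variable {k k' l : ℂ}

theorem one_sub_mul_moebius (hkk : k ^ 2 + k' ^ 2 = 1) (hl : k' - l ≠ 0) :
    1 - k' * ((1 - k' * l) / (k' - l)) = -(k ^ 2 * l) / (k' - l) := by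
  field_simp
  linear_combination l * hkk

theorem one_sub_mul_moebius_inv (hkk : k ^ 2 + k' ^ 2 = 1) (hl : 1 - k' * l ≠ 0) :
    1 - k' * ((1 - k' * l) / (k' - l))⁻¹ = k ^ 2 / (1 - k' * l) := by
  rw [inv_div]
  field_simp
  linear_combination -hkk

end Moebius

namespace OnHyp

variable {N : ℕ} {k k' t l : ℂ}

theorem mul_of_pow_eq_one {ω : ℂ} (hω : ω ^ N = 1) (h : OnHyp N k' k t l) :
    OnHyp N k' k (ω * t) l :=
  ⟨h.1, by rw [mul_pow, hω, one_mul, h.2]⟩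

theorem inv (h : OnHyp N k' k t l) : OnHyp N k' k t l⁻¹ :=
  ⟨inv_ne_zero h.1, by rw [inv_inv, h.2, mul_comm]⟩

theorem moebius (hkk : k ^ 2 + k' ^ 2 = 1) (h : OnHyp N k' k t l) (ht : t ≠ 0)
    (hlk : l ≠ k') (hkl : k' * l ≠ 1) :
    OnHyp N k' k t⁻¹ ((1 - k' * l) / (k' - l)) := by
  obtain ⟨hl, heq⟩ := h
  have hnum : 1 - k' * l ≠ 0 := sub_ne_zero.mpr hkl.symm
  have hden : k' - l ≠ 0 := sub_ne_zero.mpr hlk.symm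
  have hcurve : (k' - l) * (1 - k' * l) = -(k ^ 2 * t ^ N * l) := by
    rw [heq]; field_simp; ring
  refine ⟨div_ne_zero hnum hden, ?_⟩
  rw [one_sub_mul_moebius hkk hden, one_sub_mul_moebius_inv hkk hnum, inv_pow,
    div_mul_div_comm, eq_div_iff (mul_ne_zero hden hnum), hcurve]
  field_simp

end OnHyp

theorem hyperelliptic_symmetries_general (N : ℕ)
    (ω : ℂ) (hω : ω = Complex.exp (2 * Real.pi * Complex.I / N))
    (k k' : ℂ) (hkk : k ^ 2 + k' ^ 2 = 1)
    (t l : ℂ) (h : OnHyp N k' k t l) :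
    OnHyp N k' k (ω * t) l ∧
    OnHyp N k' k t l⁻¹ ∧
    (t ≠ 0 → l ≠ k' → k' * l ≠ 1 →
      OnHyp N k' k t⁻¹ ((1 - k' * l) / (k' - l))) :=
  ⟨h.mul_of_pow_eq_one (hω ▸ Complex.exp_two_pi_I_div_pow_self N), h.inv,
    h.moebius hkk⟩

/-- The generators `θ, σ, ι` of the `ℤ/2 × D_N` symmetry of the hyperelliptic curve of
the `τ⁽²⁾`-model: with `ω = exp(2πi/N)`, if `(t,λ) ∈ W_{k',k}` then `(ωt, λ)` and
`(t, λ⁻¹)` lie on `W_{k',k}`, and if in addition `t ≠ 0`, `λ ≠ k'` and `k'λ ≠ 1`, then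
`(t⁻¹, (1 − k'λ)/(k' − λ))` lies on `W_{k',k}`. -/
theorem hyperelliptic_symmetries (N : ℕ) (hN : 2 ≤ N)
    (ω : ℂ) (hω : ω = Complex.exp (2 * Real.pi * Complex.I / N))
    (k k' : ℂ) (hkk : k ^ 2 + k' ^ 2 = 1)
    (t l : ℂ) (h : OnHyp N k' k t l) :
    OnHyp N k' k (ω * t) l ∧
    OnHyp N k' k t l⁻¹ ∧
    (t ≠ 0 → l ≠ k' → k' * l ≠ 1 →
      OnHyp N k' k t⁻¹ ((1 - k' * l) / (k' - l))) :=
  hyperelliptic_symmetries_general N ω hω k k' hkk t l h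
end

section
/- Let N ≥ 2, ω = exp(2πi/N), ω^(1/2) = exp(πi/N), and let k, k' ∈ ℂ with k² + k'² = 1. Suppose (t, λ) ∈ ℂ² with λ ≠ 0 satisfies k²·t^N = (1 − k'λ)(1 − k'λ⁻¹). Then: (i) if k' ≠ 0, setting (K', K) := (1/k', ik/k') one has K'² + K² = 1 and K²·(ω^(1/2)t)^N = (1 − K'·λ⁻¹)(1 − K'·λ), i.e. the pair (ω^(1/2)t, λ⁻¹) lies on W_{1/k', ik/k'} (the Kramers–Wannier duality map T); (ii) the pair (ωt, λ) lies on W_{k', −k}; (iii) the pair (t, −λ) lies on W_{−k', k}. -/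
/-- Modular symmetries of the hyperelliptic family: with `ω = exp(2πi/N)` and
`ω^(1/2) = exp(πi/N)`, if `(t,λ) ∈ W_{k',k}` then
(i) if `k' ≠ 0`, with `(K',K) = (1/k', ik/k')` one has `K'² + K² = 1` and
`(ω^(1/2)t, λ⁻¹) ∈ W_{1/k', ik/k'}` (Kramers–Wannier duality `T`);
(ii) `(ωt, λ) ∈ W_{k',−k}`; (iii) `(t, −λ) ∈ W_{−k',k}`. -/
theorem hyperelliptic_modular_symmetries (N : ℕ) (hN : 2 ≤ N)
    (ω ωh : ℂ)
    (hω : ω = Complex.exp (2 * Real.pi * Complex.I / N))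
    (hωh : ωh = Complex.exp (Real.pi * Complex.I / N))
    (k k' : ℂ) (hkk : k ^ 2 + k' ^ 2 = 1)
    (t l : ℂ) (h : OnHyp N k' k t l) :
    (k' ≠ 0 →
      (1 / k') ^ 2 + (Complex.I * k / k') ^ 2 = 1 ∧
      OnHyp N (1 / k') (Complex.I * k / k') (ωh * t) l⁻¹) ∧
    OnHyp N k' (-k) (ω * t) l ∧
    OnHyp N (-k') k t (-l) := by
  obtain ⟨hl, heq⟩ := h
  have hNne : (N : ℂ) ≠ 0 := Nat.cast_ne_zero.mpr (by omega)
  have hωhN : ωh ^ N = -1 := by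
    rw [hωh, ← Complex.exp_nat_mul, mul_div_cancel₀ _ hNne, Complex.exp_pi_mul_I]
  have hωN : ω ^ N = 1 := by
    rw [hω, ← Complex.exp_nat_mul, mul_div_cancel₀ _ hNne]
    have : (2 : ℂ) * Real.pi * Complex.I = 2 * Real.pi * Complex.I := rfl
    simp [Complex.exp_two_pi_mul_I]
  have hll : l * l⁻¹ = 1 := mul_inv_cancel₀ hl
  refine ⟨fun hk' => ?_, ⟨hl, ?_⟩, ⟨neg_ne_zero.mpr hl, ?_⟩⟩
  · constructor
    · field_simp
      linear_combination (k ^ 2 : ℂ) * Complex.I_sq - hkk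
    · refine ⟨inv_ne_zero hl, ?_⟩
      have key : k ^ 2 * t ^ N = (k' - l⁻¹) * (k' - l) := by
        linear_combination heq + (k' ^ 2 - 1) * hll
      rw [mul_pow, hωhN, inv_inv, div_pow, mul_pow, Complex.I_sq, one_div,
        div_mul_eq_mul_div, div_eq_iff (pow_ne_zero 2 hk')]
      have hki : k' * k'⁻¹ = 1 := mul_inv_cancel₀ hk'
      linear_combination key + (k' * l⁻¹ + k' * l - l * l⁻¹ * (k' * k'⁻¹ + 1)) * hki
  · rw [mul_pow, hωN]
    linear_combination heq
  · rw [← neg_inv]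
    linear_combination heq
end
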